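/- arXiv:2407.08636 — 2 statements merged into one kernel-verified Lean document; each statement's English description precedes it below -/
import Mathlib

section
/- Let 0 < δ ≤ 1 and let H, K be positive integers with H ≤ (δ²/4)·K. If f : ℤ → ℂ is a 1-bounded function satisfying |𝔼_{z∈[K]} f(z)| ≥ δ, then Re(𝔼_{h,h'∈[±H]} 𝔼_{z∈[K]} f(z+h)·conj(f(z+h'))) ≥ δ²/4 and Re(Σ_{h∈ℤ} μ_H(h)·𝔼_{z∈[K]} f(z)·conj(f(z+h))) ≥ δ²/4. -/
/-!
Write `I = [-H, H]`. For the double average, put `g z = ∑_{h ∈ I} f (z + h)`: the average is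
`‖g‖²` summed over `[K]`, and since shifting a window of length `K` by `h` moves its sum by at
most `2|h|`, `∑_{[K]} g` is within `(2H+1)·2H` of `(2H+1) ∑_{[K]} f`; Cauchy–Schwarz concludes.

For the Fejér average, `(2H+1)² μ_H(h)` counts the representations `h = h₁ - h₂` with
`h₁, h₂ ∈ I`. After truncating `f` to `F = f·1_[K]`, this turns the Fejér sum into
`(2H+1)⁻² ∑_w ‖∑_{h ∈ I} F (w + h)‖²`, whose window sums over `w ∈ [1-H, K+H]` add up to exactly
`(2H+1) ∑_{[K]} f`, so Cauchy–Schwarz over these `K + 2H` points gives the main term. The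
truncation changes the correlation at lag `h` by at most `|h|`, and `μ_H(h)|h| ≤ 1/4`.
-/

noncomputable def fejer (H : ℕ) (h : ℤ) : ℝ :=
  (2 * H + 1 : ℝ)⁻¹ * max 0 (1 - |(h : ℝ)| / (2 * H + 1))

open Finset ComplexConjugate

section Fejer

variable (H : ℕ)

lemma fejer_nonneg (h : ℤ) : 0 ≤ fejer H h :=
  mul_nonneg (by positivity) (le_max_left _ _)

lemma fejer_eq_zero {h : ℤ} (hh : 2 * (H : ℤ) < |h|) : fejer H h = 0 := by
  have : (2 * H + 1 : ℝ) ≤ |(h : ℝ)| := by rw [← Int.cast_abs]; exact_mod_cast hh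
  rw [fejer, max_eq_left, mul_zero]
  rw [sub_nonpos, le_div_iff₀ (by positivity)]
  linarith

lemma sq_mul_fejer {h : ℤ} (hh : |h| ≤ 2 * (H : ℤ)) :
    (2 * H + 1 : ℝ) ^ 2 * fejer H h = 2 * H + 1 - |(h : ℝ)| := by
  have : |(h : ℝ)| ≤ 2 * H := by rw [← Int.cast_abs]; exact_mod_cast hh
  rw [fejer, max_eq_right]
  · field_simp
  · rw [sub_nonneg, div_le_one (by positivity)]
    linarith

lemma fejer_mul_abs_le (h : ℤ) : fejer H h * |(h : ℝ)| ≤ 1 / 4 := by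
  rcases lt_or_ge (2 * (H : ℤ)) |h| with hh | hh
  · simp [fejer_eq_zero H hh]
  have hN : (0 : ℝ) < (2 * H + 1) ^ 2 := by positivity
  rw [← mul_le_mul_iff_right₀ hN, ← mul_assoc, sq_mul_fejer H hh]
  nlinarith [sq_nonneg (2 * H + 1 - 2 * |(h : ℝ)|)]

lemma sum_sum_sub_eq_sum_nsmul {M : Type*} [AddCommMonoid M] (φ : ℤ → M) :
    ∑ h₁ ∈ Icc (-(H : ℤ)) H, ∑ h₂ ∈ Icc (-(H : ℤ)) H, φ (h₁ - h₂) =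
      ∑ h ∈ Icc (-(2 * H : ℤ)) (2 * H), (2 * H + 1 - h.natAbs) • φ h := by
  have hreindex : ∀ h₁ : ℤ, ∑ h₂ ∈ Icc (-(H : ℤ)) H, φ (h₁ - h₂) =
      ∑ h ∈ Icc (h₁ - H) (h₁ + H), φ h := fun h₁ =>
    sum_nbij' (fun h₂ => h₁ - h₂) (fun h => h₁ - h) (by intros; simp_all; omega)
      (by intros; simp_all; omega) (by simp) (by simp) (by simp)
  simp_rw [hreindex]
  rw [sum_comm' (t' := Icc (-(2 * H : ℤ)) (2 * H))
    (s' := fun h => Icc (max (-(H : ℤ)) (h - H)) (min (H : ℤ) (h + H))) (by intros; simp; omega)]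
  refine sum_congr rfl fun h hh => ?_
  rw [sum_const, Int.card_Icc]
  congr 1
  simp only [mem_Icc] at hh
  omega

lemma sum_sum_sub_eq_sq_smul_sum_fejer_smul {M : Type*} [AddCommGroup M] [Module ℝ M]
    (φ : ℤ → M) :
    ∑ h₁ ∈ Icc (-(H : ℤ)) H, ∑ h₂ ∈ Icc (-(H : ℤ)) H, φ (h₁ - h₂) =
      (2 * H + 1 : ℝ) ^ 2 • ∑ h ∈ Icc (-(2 * H : ℤ)) (2 * H), fejer H h • φ h := by
  rw [sum_sum_sub_eq_sum_nsmul, smul_sum]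
  refine sum_congr rfl fun h hh => ?_
  have hh' : |h| ≤ 2 * (H : ℤ) := abs_le.mpr (mem_Icc.mp hh)
  rw [smul_smul, sq_mul_fejer H hh', ← Nat.cast_smul_eq_nsmul ℝ]
  congr 1
  rw [Nat.cast_sub (by have := mem_Icc.mp hh; omega), Nat.cast_natAbs]
  push_cast
  rfl

lemma finsum_fejer_smul {M : Type*} [AddCommGroup M] [Module ℝ M] (φ : ℤ → M) :
    ∑ᶠ h, fejer H h • φ h = ∑ h ∈ Icc (-(2 * H : ℤ)) (2 * H), fejer H h • φ h := by
  refine finsum_eq_sum_of_support_subset _ fun h hh => ?_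
  by_contra hJ
  have : 2 * (H : ℤ) < |h| := by
    simp only [coe_Icc, Set.mem_Icc, not_and_or, not_le] at hJ
    rw [lt_abs]; omega
  simp [fejer_eq_zero H this] at hh

end Fejer

lemma card_Icc_neg_self (H : ℕ) : (#(Icc (-(H : ℤ)) H) : ℝ) = 2 * H + 1 := by
  rw [Int.card_Icc, show (H : ℤ) + 1 - -(H : ℤ) = ((2 * H + 1 : ℕ) : ℤ) by push_cast; ring,
    Int.toNat_natCast]
  push_cast; ring

lemma card_Icc_sdiff_Icc_add_le (a b c : ℤ) : (#(Icc a b \ Icc (a + c) (b + c)) : ℤ) ≤ |c| := by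
  have hinter : Icc (a + c) (b + c) ∩ Icc a b = Icc (max (a + c) a) (min (b + c) b) := by
    ext; simp only [mem_inter, mem_Icc]; omega
  rw [card_sdiff, hinter, Int.card_Icc, Int.card_Icc]
  rcases abs_cases c with ⟨_, _⟩ | ⟨_, _⟩ <;> omega

lemma norm_sum_le_card {ι E : Type*} [SeminormedAddCommGroup E] {s : Finset ι} {g : ι → E}
    (hg : ∀ x ∈ s, ‖g x‖ ≤ 1) : ‖∑ x ∈ s, g x‖ ≤ #s :=
  (norm_sum_le_of_le s hg).trans (by simp)

lemma norm_sum_Icc_add_sub_sum_Icc_le {E : Type*} [SeminormedAddCommGroup E] {u : ℤ → E}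
    (hu : ∀ x, ‖u x‖ ≤ 1) (a b c : ℤ) :
    ‖∑ x ∈ Icc a b, u (x + c) - ∑ x ∈ Icc a b, u x‖ ≤ 2 * |(c : ℝ)| := by
  have hcard (s : Finset ℤ) (hs : (#s : ℤ) ≤ |c|) : ‖∑ x ∈ s, u x‖ ≤ |(c : ℝ)| :=
    (norm_sum_le_card fun x _ => hu x).trans (by rw [← Int.cast_abs]; exact_mod_cast hs)
  have hshift : ∑ x ∈ Icc a b, u (x + c) = ∑ x ∈ Icc (a + c) (b + c), u x := by
    rw [← map_add_right_Icc, sum_map]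
    rfl
  have hback := card_Icc_sdiff_Icc_add_le (a + c) (b + c) (-c)
  rw [add_neg_cancel_right, add_neg_cancel_right, abs_neg] at hback
  rw [hshift, ← sum_sdiff_sub_sum_sdiff]
  linarith [norm_sub_le (∑ x ∈ Icc (a + c) (b + c) \ Icc a b, u x)
    (∑ x ∈ Icc a b \ Icc (a + c) (b + c), u x), hcard _ hback,
    hcard _ (card_Icc_sdiff_Icc_add_le a b c)]

lemma norm_sum_mul_conj_sub_indicator_le {u : ℤ → ℂ} (hu : ∀ x, ‖u x‖ ≤ 1) (a b h : ℤ) :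
    ‖∑ z ∈ Icc a b, u z * conj (u (z + h)) -
      ∑ z ∈ Icc a b, (Icc a b : Set ℤ).indicator u z *
        conj ((Icc a b : Set ℤ).indicator u (z + h))‖ ≤ |(h : ℝ)| := by
  have hterm : ∀ z ∈ Icc a b, u z * conj (u (z + h)) -
      (Icc a b : Set ℤ).indicator u z * conj ((Icc a b : Set ℤ).indicator u (z + h)) =
      if z + h ∉ Icc a b then u z * conj (u (z + h)) else 0 := by
    intro z hz
    by_cases hzh : z + h ∈ Icc a b
    · rw [if_neg (not_not.mpr hzh), Set.indicator_of_mem (mem_coe.mpr hz),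
        Set.indicator_of_mem (mem_coe.mpr hzh), sub_self]
    · rw [if_pos hzh, Set.indicator_of_mem (mem_coe.mpr hz),
        Set.indicator_of_notMem (s := (Icc a b : Set ℤ)) (a := z + h) (mod_cast hzh), map_zero,
        mul_zero, sub_zero]
  have hfilter : {z ∈ Icc a b | z + h ∉ Icc a b} = Icc a b \ Icc (a + -h) (b + -h) := by
    ext z; simp only [mem_filter, mem_sdiff, mem_Icc]; omega
  rw [← sum_sub_distrib, sum_congr rfl hterm, ← sum_filter, hfilter]
  refine (norm_sum_le_card fun z _ => ?_).trans ?_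
  · simpa using mul_le_one₀ (hu z) (norm_nonneg _) (hu (z + h))
  · rw [← Int.cast_abs, ← abs_neg]; exact_mod_cast card_Icc_sdiff_Icc_add_le a b (-h)

lemma sum_sum_sum_mul_conj_eq_sum_norm_sq {ι κ : Type*} (s : Finset ι) (t : Finset κ)
    (v : ι → κ → ℂ) :
    ∑ h ∈ t, ∑ h' ∈ t, ∑ z ∈ s, v z h * conj (v z h') =
      ((∑ z ∈ s, ‖∑ h ∈ t, v z h‖ ^ 2 : ℝ) : ℂ) := by
  push_cast
  simp_rw [← Complex.mul_conj', map_sum, sum_mul_sum]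
  symm
  rw [sum_comm]
  exact sum_congr rfl fun _ _ => by rw [sum_comm]

lemma sq_le_card_mul_sum_norm_sq {ι E : Type*} [SeminormedAddCommGroup E] (s : Finset ι)
    (v : ι → E) {a : ℝ} (ha : 0 ≤ a) (hv : a ≤ ‖∑ z ∈ s, v z‖) :
    a ^ 2 ≤ #s * ∑ z ∈ s, ‖v z‖ ^ 2 :=
  (pow_le_pow_left₀ ha (hv.trans (norm_sum_le _ _)) 2).trans sq_sum_le_card_mul_sum_sq

section Shift

variable {G M : Type*} [AddCommGroup G] [AddCommMonoid M] {s t I : Finset G}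

lemma sum_add_right_eq_of_support_subset {u : G → M} {a : G} (hu : ∀ x ∉ s, u x = 0)
    (hst : s ⊆ t.map (addRightEmbedding a)) :
    ∑ x ∈ t, u (x + a) = ∑ x ∈ s, u x := by
  rw [sum_subset hst fun x _ hx => hu x hx, sum_map]
  rfl

lemma sum_sum_add_eq_card_nsmul_sum {u : G → M} (hu : ∀ x ∉ s, u x = 0)
    (hst : ∀ h ∈ I, s ⊆ t.map (addRightEmbedding h)) :
    ∑ w ∈ t, ∑ h ∈ I, u (w + h) = #I • ∑ x ∈ s, u x := by
  rw [sum_comm, ← sum_const]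
  exact sum_congr rfl fun h hh => sum_add_right_eq_of_support_subset hu (hst h hh)

lemma sum_norm_sq_sum_add_eq {u : G → ℂ} (hu : ∀ x ∉ s, u x = 0)
    (hst : ∀ h ∈ I, s ⊆ t.map (addRightEmbedding h)) :
    ((∑ w ∈ t, ‖∑ h ∈ I, u (w + h)‖ ^ 2 : ℝ) : ℂ) =
      ∑ h₁ ∈ I, ∑ h₂ ∈ I, ∑ z ∈ s, u z * conj (u (z + (h₁ - h₂))) := by
  rw [← sum_sum_sum_mul_conj_eq_sum_norm_sq t I fun w h => u (w + h), sum_comm]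
  refine sum_congr rfl fun h₁ _ => sum_congr rfl fun h₂ hh₂ => ?_
  rw [← sum_add_right_eq_of_support_subset (fun x hx => by simp [hu x hx]) (hst h₂ hh₂)]
  exact sum_congr rfl fun x _ => by rw [add_add_sub_cancel]

end Shift

lemma norm_sum_sq_le_mul_re_sum_fejer_smul (H K : ℕ) (u : ℤ → ℂ) :
    ‖∑ z ∈ Icc (1 : ℤ) K, u z‖ ^ 2 ≤ (K + 2 * H) *
      (∑ h ∈ Icc (-(2 * H : ℤ)) (2 * H), fejer H h • ∑ z ∈ Icc (1 : ℤ) K,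
        (Icc (1 : ℤ) K : Set ℤ).indicator u z *
          conj ((Icc (1 : ℤ) K : Set ℤ).indicator u (z + h))).re := by
  set I := Icc (-(H : ℤ)) H
  set Z := Icc (1 : ℤ) K
  set V := Icc (1 - (H : ℤ)) (K + H)
  set F := (Z : Set ℤ).indicator u
  set S := ∑ w ∈ V, ‖∑ h ∈ I, F (w + h)‖ ^ 2
  have hF0 : ∀ x ∉ Z, F x = 0 := fun x hx => Set.indicator_of_notMem (mod_cast hx) u
  have hZV : ∀ h ∈ I, Z ⊆ V.map (addRightEmbedding h) := fun h hh => by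
    simp only [I, mem_Icc] at hh
    rw [map_add_right_Icc]
    exact Icc_subset_Icc (by omega) (by omega)
  have hcardV : (#V : ℝ) = K + 2 * H := by
    rw [Int.card_Icc, show (K + H : ℤ) + 1 - (1 - H) = ((K + 2 * H : ℕ) : ℤ) by push_cast; ring,
      Int.toNat_natCast]
    push_cast; ring
  have hcs : ((2 * H + 1) * ‖∑ z ∈ Z, u z‖) ^ 2 ≤ (K + 2 * H) * S := by
    rw [← hcardV]
    refine sq_le_card_mul_sum_norm_sq _ _ (by positivity) ?_
    rw [sum_sum_add_eq_card_nsmul_sum hF0 hZV, nsmul_eq_mul, norm_mul, Complex.norm_natCast,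
      card_Icc_neg_self, sum_congr rfl fun z hz => Set.indicator_of_mem (mem_coe.mpr hz) u]
  have hS := congrArg Complex.re
    ((sum_norm_sq_sum_add_eq hF0 hZV).trans
      (sum_sum_sub_eq_sq_smul_sum_fejer_smul H fun h => ∑ z ∈ Z, F z * conj (F (z + h))))
  rw [Complex.ofReal_re, Complex.smul_re, smul_eq_mul] at hS
  refine le_of_mul_le_mul_left ?_ (by positivity : (0 : ℝ) < (2 * H + 1) ^ 2)
  calc (2 * H + 1 : ℝ) ^ 2 * ‖∑ z ∈ Z, u z‖ ^ 2 = ((2 * H + 1) * ‖∑ z ∈ Z, u z‖) ^ 2 := by ring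
    _ ≤ (K + 2 * H) * S := hcs
    _ = _ := by rw [show S = _ from hS]; ring

lemma norm_sum_fejer_smul_sub_indicator_le (H : ℕ) {u : ℤ → ℂ} (hu : ∀ x, ‖u x‖ ≤ 1) (a b : ℤ) :
    ‖∑ h ∈ Icc (-(2 * H : ℤ)) (2 * H), fejer H h • (∑ z ∈ Icc a b, u z * conj (u (z + h)) -
      ∑ z ∈ Icc a b, (Icc a b : Set ℤ).indicator u z *
        conj ((Icc a b : Set ℤ).indicator u (z + h)))‖ ≤ (4 * H + 1) / 4 := by
  refine (norm_sum_le_of_le _ (n := fun _ => 1 / 4) fun h _ => ?_).trans ?_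
  · rw [norm_smul, Real.norm_of_nonneg (fejer_nonneg H h)]
    exact (mul_le_mul_of_nonneg_left (norm_sum_mul_conj_sub_indicator_le hu a b h)
      (fejer_nonneg H h)).trans (fejer_mul_abs_le H h)
  · rw [sum_const, nsmul_eq_mul, Int.card_Icc,
      show (2 * H : ℤ) + 1 - -(2 * H : ℤ) = ((4 * H + 1 : ℕ) : ℤ) by push_cast; ring,
      Int.toNat_natCast]
    push_cast; linarith

section VanDerCorput

variable {δ : ℝ} {H K : ℕ} {f : ℤ → ℂ}

lemma sq_div_four_le_re_sum_sum_sum_mul_conj (hδ0 : 0 < δ) (hδ1 : δ ≤ 1) (hK : 0 < K)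
    (hHK : (H : ℝ) ≤ δ ^ 2 / 4 * K) (hf : ∀ x, ‖f x‖ ≤ 1)
    (havg : δ * K ≤ ‖∑ z ∈ Icc (1 : ℤ) K, f z‖) :
    δ ^ 2 / 4 ≤ (((2 * (H : ℂ) + 1) ^ 2 * (K : ℂ))⁻¹ *
        ∑ h ∈ Icc (-(H : ℤ)) H, ∑ h' ∈ Icc (-(H : ℤ)) H,
          ∑ z ∈ Icc (1 : ℤ) K, f (z + h) * conj (f (z + h'))).re := by
  set I := Icc (-(H : ℤ)) H
  set Z := Icc (1 : ℤ) K
  have hKpos : (0 : ℝ) < K := by exact_mod_cast hK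
  have hshift : ∀ h ∈ I, ‖∑ z ∈ Z, f (z + h) - ∑ z ∈ Z, f z‖ ≤ 2 * H := fun h hh => by
    have : |(h : ℝ)| ≤ H := by
      rw [← Int.cast_abs]; exact_mod_cast abs_le.mpr (mem_Icc.mp hh)
    linarith [norm_sum_Icc_add_sub_sum_Icc_le hf 1 K h]
  have hmean : ‖∑ z ∈ Z, ∑ h ∈ I, f (z + h) - #I • ∑ z ∈ Z, f z‖ ≤ #I * (2 * H) := by
    rw [sum_comm, ← sum_const, ← sum_sub_distrib]
    exact (norm_sum_le_of_le _ hshift).trans (by simp)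
  have hlower : (2 * H + 1) * (δ * K / 2) ≤ ‖∑ z ∈ Z, ∑ h ∈ I, f (z + h)‖ := by
    have := norm_sub_norm_le (#I • ∑ z ∈ Z, f z) (∑ z ∈ Z, ∑ h ∈ I, f (z + h))
    rw [norm_sub_rev, nsmul_eq_mul, norm_mul, Complex.norm_natCast] at this
    rw [nsmul_eq_mul, card_Icc_neg_self] at hmean
    rw [card_Icc_neg_self] at this
    have h2H : 2 * (H : ℝ) ≤ δ * K / 2 := by nlinarith
    nlinarith [mul_le_mul_of_nonneg_left havg (by positivity : (0 : ℝ) ≤ 2 * H + 1),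
      mul_le_mul_of_nonneg_left h2H (by positivity : (0 : ℝ) ≤ 2 * H + 1)]
  have hcs := sq_le_card_mul_sum_norm_sq Z _ (by positivity) hlower
  rw [Int.card_Icc, show (K : ℤ) + 1 - 1 = K by ring, Int.toNat_natCast] at hcs
  rw [sum_sum_sum_mul_conj_eq_sum_norm_sq Z I fun z h => f (z + h),
    show ((2 * (H : ℂ) + 1) ^ 2 * (K : ℂ))⁻¹ = ((((2 * H + 1) ^ 2 * K)⁻¹ : ℝ) : ℂ) by
      push_cast; ring,
    Complex.re_ofReal_mul, Complex.ofReal_re, le_inv_mul_iff₀ (by positivity)]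
  refine le_of_mul_le_mul_left ?_ hKpos
  linarith [show (K : ℝ) * ((2 * H + 1) ^ 2 * K * (δ ^ 2 / 4)) =
    ((2 * H + 1) * (δ * K / 2)) ^ 2 by ring]

lemma sq_div_four_le_re_finsum_fejer_mul (hδ0 : 0 < δ) (hδ1 : δ ≤ 1) (hH : 0 < H) (hK : 0 < K)
    (hHK : (H : ℝ) ≤ δ ^ 2 / 4 * K) (hf : ∀ x, ‖f x‖ ≤ 1)
    (havg : δ * K ≤ ‖∑ z ∈ Icc (1 : ℤ) K, f z‖) :
    δ ^ 2 / 4 ≤ (∑ᶠ h : ℤ, (fejer H h : ℂ) *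
        ((∑ z ∈ Icc (1 : ℤ) K, f z * conj (f (z + h))) / (K : ℂ))).re := by
  set Z := Icc (1 : ℤ) K
  set F := (Z : Set ℤ).indicator f
  set c : ℤ → ℂ := fun h => ∑ z ∈ Z, f z * conj (f (z + h))
  set cF : ℤ → ℂ := fun h => ∑ z ∈ Z, F z * conj (F (z + h))
  have hKpos : (0 : ℝ) < K := by exact_mod_cast hK
  have hsplit : ∑ᶠ h : ℤ, (fejer H h : ℂ) * (c h / K) =
      (∑ h ∈ Icc (-(2 * H : ℤ)) (2 * H), fejer H h • cF h +
        ∑ h ∈ Icc (-(2 * H : ℤ)) (2 * H), fejer H h • (c h - cF h)) / K := by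
    simp_rw [← Complex.real_smul]
    rw [finsum_fejer_smul, ← sum_add_distrib, sum_div]
    exact sum_congr rfl fun h _ => by rw [← smul_add, add_sub_cancel, smul_div_assoc]
  rw [hsplit, Complex.div_natCast_re, Complex.add_re, le_div_iff₀ hKpos]
  have hmain := norm_sum_sq_le_mul_re_sum_fejer_smul H K f
  have herr := neg_le_of_abs_le
    ((Complex.abs_re_le_norm _).trans (norm_sum_fejer_smul_sub_indicator_le H hf 1 K))
  set x := (∑ h ∈ Icc (-(2 * H : ℤ)) (2 * H), fejer H h • cF h).re
  have hx : (δ * K) ^ 2 ≤ (K + 2 * H) * x :=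
    (pow_le_pow_left₀ (by positivity) havg 2).trans hmain
  have hδsq : δ ^ 2 ≤ 1 := by nlinarith
  have hHK' : 2 * (H : ℝ) ≤ K / 2 := by nlinarith [mul_le_mul_of_nonneg_right hδsq hKpos.le]
  have hx0 : 0 ≤ x := by
    by_contra! hneg
    nlinarith [mul_neg_of_pos_of_neg (by positivity : (0 : ℝ) < K + 2 * H) hneg]
  have hx' : 2 / 3 * (δ ^ 2 * K) ≤ x := by
    refine le_of_mul_le_mul_left ?_ hKpos
    nlinarith [mul_le_mul_of_nonneg_right hHK' hx0]
  have hHpos : (1 : ℝ) ≤ H := by exact_mod_cast hH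
  linarith [mul_nonneg (sq_nonneg δ) hKpos.le]

end VanDerCorput

/-- van der Corput inequality, version 2 (Lemma 3.3 of the paper). -/
theorem stmt5 (δ : ℝ) (hδ0 : 0 < δ) (hδ1 : δ ≤ 1) (H K : ℕ) (hH : 0 < H) (hK : 0 < K)
    (hHK : (H : ℝ) ≤ δ ^ 2 / 4 * K)
    (f : ℤ → ℂ) (hf : ∀ x, ‖f x‖ ≤ 1)
    (havg : δ ≤ ‖(∑ z ∈ Finset.Icc (1 : ℤ) (K : ℤ), f z) / (K : ℂ)‖) :
    δ ^ 2 / 4 ≤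
      (((2 * (H : ℂ) + 1) ^ 2 * (K : ℂ))⁻¹ *
        ∑ h ∈ Finset.Icc (-(H : ℤ)) (H : ℤ), ∑ h' ∈ Finset.Icc (-(H : ℤ)) (H : ℤ),
          ∑ z ∈ Finset.Icc (1 : ℤ) (K : ℤ), f (z + h) * (starRingEnd ℂ) (f (z + h'))).re ∧
    δ ^ 2 / 4 ≤
      (∑ᶠ h : ℤ, (fejer H h : ℂ) *
        ((∑ z ∈ Finset.Icc (1 : ℤ) (K : ℤ), f z * (starRingEnd ℂ) (f (z + h))) / (K : ℂ))).re := by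
  have hsum : δ * K ≤ ‖∑ z ∈ Icc (1 : ℤ) K, f z‖ := by
    rwa [norm_div, Complex.norm_natCast, le_div_iff₀ (by exact_mod_cast hK)] at havg
  exact ⟨sq_div_four_le_re_sum_sum_sum_mul_conj hδ0 hδ1 hK hHK hf hsum,
    sq_div_four_le_re_finsum_fejer_mul hδ0 hδ1 hH hK hHK hf hsum⟩
end

section
/- Let ℓ ≥ 2 be an integer. There exists a constant C > 0 depending only on ℓ such that for all positive integers h_1, …, h_ℓ, all M ∈ ℕ, and all t ∈ ℤ, the number of tuples (m_1, …, m_{ℓ−1}) ∈ [±M]^{ℓ−1} with h_1·m_1 + ⋯ + h_{ℓ−1}·m_{ℓ−1} ≡ t (mod h_ℓ) is at most C·(M^{ℓ−1}·gcd(h_1, …, h_ℓ)/h_ℓ + M^{ℓ−2}). -/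
/-!
Induct on the number of variables, splitting off the last one. Once the other variables are
fixed, the congruence `a x ≡ t' (mod q)` with `d = gcd(q, a)` has its solutions in one residue
class modulo `q / d`, hence at most `2 M d / q + 1` of them in `[±M]`; and the other variables
must themselves solve `∑ hᵢ mᵢ ≡ t (mod d)`, a congruence of the same shape with modulus `d`
and the same `gcd(h, d) = gcd(h, a, q)`. Multiplying the two counts and using
`gcd(h, a, q) ≤ d ≤ q` and `M ≥ 1` gives the bound with `C = 4 ^ (ℓ - 1)`.
-/

open Finset

theorem card_Icc_filter_modEq_mul_le {a b : ℤ} (hab : a ≤ b) (v : ℤ) {r : ℤ} (hr : 0 < r) :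
    (#{x ∈ Icc a b | x ≡ v [ZMOD r]} : ℤ) * r ≤ b - a + r := by
  have hIcc : Icc a b = Ioc (a - 1) b := by ext; simp only [mem_Icc, mem_Ioc]; omega
  rw [hIcc, Int.Ioc_filter_modEq_card _ _ hr]
  set u : ℚ := (b - v) / r with hu
  set w : ℚ := ((a - 1 : ℤ) - v) / r with hw
  have huw : (u - w) * r = b - a + 1 := by
    rw [hu, hw]; field_simp; push_cast; ring
  have hlt : ((⌊u⌋ - ⌊w⌋ : ℤ) : ℚ) * r < b - a + 1 + r := by
    have hr' : (0 : ℚ) < r := by exact_mod_cast hr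
    have := Int.floor_le u
    have := Int.lt_floor_add_one w
    push_cast
    nlinarith
  have hlt' : (⌊u⌋ - ⌊w⌋) * r < b - a + 1 + r := by exact_mod_cast hlt
  rcases le_total (⌊u⌋ - ⌊w⌋) 0 with h | h
  · rw [max_eq_right h]; linarith
  · rw [max_eq_left h]; linarith

theorem card_Icc_filter_mul_modEq_mul_le {a b : ℤ} (hab : a ≤ b) (c v : ℤ) {q : ℤ} (hq : 0 < q) :
    (#{x ∈ Icc a b | c * x ≡ v [ZMOD q]} : ℤ) * q ≤ (b - a) * gcd q c + q := by
  rcases eq_empty_or_nonempty {x ∈ Icc a b | c * x ≡ v [ZMOD q]} with hempty | ⟨x₀, hx₀⟩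
  · rw [hempty, card_empty, Nat.cast_zero, zero_mul]
    nlinarith [Int.gcd_nonneg q c]
  have hsub : {x ∈ Icc a b | c * x ≡ v [ZMOD q]} ⊆ {x ∈ Icc a b | x ≡ x₀ [ZMOD q / gcd q c]} := by
    intro x hx
    simp only [mem_filter] at hx hx₀ ⊢
    refine ⟨hx.1, ?_⟩
    rw [← Int.coe_gcd]
    exact (hx.2.trans hx₀.2.symm).cancel_left_div_gcd hq
  have hqd : gcd q c * (q / gcd q c) = q := Int.mul_ediv_cancel' (gcd_dvd_left q c)
  have hd₀ : 0 ≤ gcd q c := Int.gcd_nonneg q c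
  have hr : 0 < q / gcd q c := Int.ediv_pos_of_pos_of_dvd hq hd₀ (gcd_dvd_left q c)
  calc (#{x ∈ Icc a b | c * x ≡ v [ZMOD q]} : ℤ) * q
      ≤ (#{x ∈ Icc a b | x ≡ x₀ [ZMOD q / gcd q c]} * (q / gcd q c)) * gcd q c := by
        rw [mul_assoc, mul_comm (q / _), hqd]
        gcongr
    _ ≤ (b - a + q / gcd q c) * gcd q c := by
        gcongr
        exact card_Icc_filter_modEq_mul_le hab x₀ hr
    _ = (b - a) * gcd q c + q := by rw [add_mul, mul_comm (q / _), hqd]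

noncomputable def boxSolutions {n : ℕ} (h : Fin n → ℤ) (q t : ℤ) (M : ℕ) : Finset (Fin n → ℤ) :=
  {m ∈ Fintype.piFinset fun _ => Icc (-(M : ℤ)) M | ∑ i, h i * m i ≡ t [ZMOD q]}

lemma mem_boxSolutions {n : ℕ} {h : Fin n → ℤ} {q t : ℤ} {M : ℕ} {m : Fin n → ℤ} :
    m ∈ boxSolutions h q t M ↔ (∀ i, m i ∈ Icc (-(M : ℤ)) M) ∧ ∑ i, h i * m i ≡ t [ZMOD q] := by
  rw [boxSolutions, mem_filter, Fintype.mem_piFinset]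

section Fiberwise

variable {n : ℕ} (h : Fin (n + 1) → ℤ) (q t : ℤ) (M : ℕ)

lemma sum_mul_eq_sum_init_add_last (m : Fin (n + 1) → ℤ) :
    ∑ i, h i * m i = ∑ i : Fin n, h i.castSucc * Fin.init m i + h (Fin.last n) * m (Fin.last n) :=
  Fin.sum_univ_castSucc _

lemma init_mem_boxSolutions {m : Fin (n + 1) → ℤ} (hm : m ∈ boxSolutions h q t M) :
    Fin.init m ∈ boxSolutions (fun i => h i.castSucc) (gcd q (h (Fin.last n))) t M := by
  rw [mem_boxSolutions] at hm ⊢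
  refine ⟨fun i => hm.1 i.castSucc, ?_⟩
  have hlast : h (Fin.last n) * m (Fin.last n) ≡ 0 [ZMOD gcd q (h (Fin.last n))] :=
    Int.modEq_zero_iff_dvd.2 (dvd_mul_of_dvd_left (gcd_dvd_right _ _) _)
  refine Int.ModEq.add_right_cancel hlast ?_
  rw [add_zero, ← sum_mul_eq_sum_init_add_last]
  exact hm.2.of_dvd (gcd_dvd_left _ _)

lemma card_filter_init_eq_le {m' : Fin n → ℤ} :
    #{m ∈ boxSolutions h q t M | Fin.init m = m'} ≤
      #{x ∈ Icc (-(M : ℤ)) M |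
        h (Fin.last n) * x ≡ t - ∑ i : Fin n, h i.castSucc * m' i [ZMOD q]} := by
  refine card_le_card_of_injOn (· (Fin.last n)) (fun m hm => ?_) (fun m₁ hm₁ m₂ hm₂ heq => ?_)
  · simp only [mem_coe, mem_filter, mem_boxSolutions] at hm ⊢
    obtain ⟨⟨hbox, hcong⟩, rfl⟩ := hm
    refine ⟨hbox _, ?_⟩
    simpa [sum_mul_eq_sum_init_add_last] using
      hcong.sub_right (∑ i : Fin n, h i.castSucc * Fin.init m i)
  · simp only [mem_coe, mem_filter] at hm₁ hm₂
    rw [← Fin.snoc_init_self m₁, ← Fin.snoc_init_self m₂, hm₁.2, hm₂.2]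
    exact congrArg _ heq

lemma card_boxSolutions_mul_le_card_init_mul (hq : 0 < q) :
    (#(boxSolutions h q t M) : ℤ) * q ≤
      #(boxSolutions (fun i => h i.castSucc) (gcd q (h (Fin.last n))) t M) *
        (2 * M * gcd q (h (Fin.last n)) + q) := by
  rw [card_eq_sum_card_fiberwise fun m hm => init_mem_boxSolutions h q t M hm, Nat.cast_sum,
    sum_mul, ← nsmul_eq_mul, ← sum_const]
  refine sum_le_sum fun m' _ => ?_
  calc (#{m ∈ boxSolutions h q t M | Fin.init m = m'} : ℤ) * q
      ≤ #{x ∈ Icc (-(M : ℤ)) M |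
          h (Fin.last n) * x ≡ t - ∑ i : Fin n, h i.castSucc * m' i [ZMOD q]} * q := by
        gcongr
        exact card_filter_init_eq_le h q t M
    _ ≤ (M - -M) * gcd q (h (Fin.last n)) + q :=
        card_Icc_filter_mul_modEq_mul_le (by omega) _ _ hq
    _ = 2 * M * gcd q (h (Fin.last n)) + q := by ring

end Fiberwise

lemma gcd_univ_eq_gcd_init_last {n : ℕ} (h : Fin (n + 1) → ℤ) :
    univ.gcd h = gcd (univ.gcd fun i : Fin n => h i.castSucc) (h (Fin.last n)) := by
  classical
  rw [Fin.univ_castSuccEmb, gcd_cons, map_eq_image, gcd_image, gcd_comm]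
  rfl

lemma gcd_gcd_univ_init_eq {n : ℕ} (h : Fin (n + 1) → ℤ) (q : ℤ) :
    gcd (univ.gcd fun i : Fin n => h i.castSucc) (gcd q (h (Fin.last n))) =
      gcd (univ.gcd h) q := by
  rw [gcd_univ_eq_gcd_init_last h, gcd_assoc, gcd_comm q]

lemma gcd_pos_of_pos_left {a : ℤ} (b : ℤ) (ha : 0 < a) : 0 < gcd a b :=
  (Int.gcd_nonneg a b).lt_of_ne fun h => ha.ne' ((_root_.gcd_eq_zero_iff a b).1 h.symm).1

lemma four_pow_bound_succ {n : ℕ} {A T M G d q : ℤ} (hM : 1 ≤ M) (hG : 0 ≤ G) (hGd : G ≤ d)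
    (hd : 0 < d) (hdq : d ≤ q) (hA : A * q ≤ T * (2 * M * d + q))
    (hT : T * d ≤ 4 ^ (n + 1) * (M ^ (n + 1) * G + M ^ n * d)) :
    A * q ≤ 4 ^ (n + 2) * (M ^ (n + 2) * G + M ^ (n + 1) * q) := by
  have hM0 : 0 ≤ M := by linarith
  have hq : 0 ≤ q := by linarith
  have hfactor : (M ^ n * M * G + M ^ n * d) * (2 * M * d + q) ≤
      4 * (M ^ n * M * M * G + M ^ n * M * q) * d := by
    have h1 : M ^ n * M * G * q ≤ M ^ n * M * d * q := by gcongr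
    have h2 : M ^ n * M * d * d ≤ M ^ n * M * d * q := by gcongr
    have h3 : M ^ n * 1 * d * q ≤ M ^ n * M * d * q := by gcongr
    have h4 : 0 ≤ M ^ n * M * M * G * d := by positivity
    nlinarith
  refine le_of_mul_le_mul_right ?_ hd
  calc A * q * d ≤ T * d * (2 * M * d + q) := by
        rw [mul_right_comm T]; gcongr
    _ ≤ 4 ^ (n + 1) * (M ^ (n + 1) * G + M ^ n * d) * (2 * M * d + q) := by gcongr
    _ ≤ 4 ^ (n + 2) * (M ^ (n + 2) * G + M ^ (n + 1) * q) * d := by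
        simp only [pow_succ] at hfactor ⊢
        nlinarith [pow_pos (by norm_num : (0 : ℤ) < 4) n]

theorem card_boxSolutions_mul_le (n : ℕ) (h : Fin (n + 1) → ℤ) {q : ℤ} (hq : 0 < q) (t : ℤ)
    {M : ℕ} (hM : 0 < M) :
    (#(boxSolutions h q t M) : ℤ) * q ≤
      4 ^ (n + 1) * (M ^ (n + 1) * gcd (univ.gcd h) q + M ^ n * q) := by
  induction n generalizing q t with
  | zero =>
    have hd := gcd_pos_of_pos_left (h (Fin.last 0)) hq
    have hT : (#(boxSolutions (fun i => h i.castSucc) (gcd q (h (Fin.last 0))) t M) : ℤ) ≤ 1 := by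
      exact_mod_cast card_le_one_of_subsingleton _
    have hstep := (card_boxSolutions_mul_le_card_init_mul h q t M hq).trans
      (mul_le_of_le_one_left (by positivity) hT)
    have : 0 ≤ (M : ℤ) * gcd q (h (Fin.last 0)) := by positivity
    rw [← gcd_gcd_univ_init_eq, univ_eq_empty, gcd_empty, gcd_zero_left,
      Int.normalize_of_nonneg hd.le]
    simp only [zero_add, pow_one, pow_zero, one_mul]
    linarith
  | succ n ih =>
    have hd := gcd_pos_of_pos_left (h (Fin.last (n + 1))) hq
    have hGd : gcd (univ.gcd h) q ≤ gcd q (h (Fin.last (n + 1))) := by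
      rw [← gcd_gcd_univ_init_eq h q]
      exact Int.le_of_dvd hd (gcd_dvd_right _ _)
    have hT := ih (fun i => h i.castSucc) hd t
    rw [gcd_gcd_univ_init_eq h q] at hT
    exact four_pow_bound_succ (Nat.one_le_cast.2 hM) (Int.gcd_nonneg _ _) hGd hd
      (Int.le_of_dvd hq (gcd_dvd_left _ _)) (card_boxSolutions_mul_le_card_init_mul h q t M hq) hT

/-- Bound on the number of solutions to a linear congruence (Lemma 6.1 of the paper).
Here `ℓ = n + 1 ≥ 2`. -/
theorem stmt15 (n : ℕ) (hn : 1 ≤ n) :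
    ∃ C : ℝ, 0 < C ∧
      ∀ (h : Fin (n + 1) → ℤ), (∀ i, 0 < h i) →
      ∀ (M : ℕ), 0 < M → ∀ t : ℤ,
        (Set.ncard {m : Fin n → ℤ |
            (∀ i, -(M : ℤ) ≤ m i ∧ m i ≤ (M : ℤ)) ∧
            h (Fin.last n) ∣ ((∑ i : Fin n, h i.castSucc * m i) - t)} : ℝ) ≤
          C * ((M : ℝ) ^ n * (((Finset.univ.gcd h : ℤ) : ℝ)) / (h (Fin.last n) : ℝ) +
            (M : ℝ) ^ (n - 1)) := by
  obtain ⟨k, rfl⟩ : ∃ k, n = k + 1 := ⟨n - 1, by omega⟩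
  refine ⟨4 ^ (k + 1), by positivity, fun h hh M hM t => ?_⟩
  have hq := hh (Fin.last (k + 1))
  have hset : {m : Fin (k + 1) → ℤ | (∀ i, -(M : ℤ) ≤ m i ∧ m i ≤ M) ∧
      h (Fin.last (k + 1)) ∣ (∑ i, h i.castSucc * m i) - t} =
      boxSolutions (fun i => h i.castSucc) (h (Fin.last (k + 1))) t M := by
    ext m
    simp only [Set.mem_ofPred_eq, mem_coe, mem_boxSolutions, mem_Icc,
      Int.modEq_comm (a := ∑ i, _), Int.modEq_iff_dvd]
  have hbound := card_boxSolutions_mul_le k (fun i => h i.castSucc) hq t hM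
  rw [← gcd_univ_eq_gcd_init_last] at hbound
  have hq' : (0 : ℝ) < h (Fin.last (k + 1)) := by exact_mod_cast hq
  rw [hset, Set.ncard_coe_finset, Nat.add_sub_cancel, div_add' _ _ _ hq'.ne', mul_div_assoc',
    le_div_iff₀ hq']
  exact_mod_cast hbound
end
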